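/- For any positive integer n and elements q, x of a commutative ring R, det[q^{|j−k|} + x·δ_{jk}]_{1≤j,k≤n} = (x+1)·u_n(1 − q^2 + (1+q^2)·x, q^2·x^2) − q^2·x^2·u_{n−1}(1 − q^2 + (1+q^2)·x, q^2·x^2), where δ_{jk} is the Kronecker delta. -/

import Mathlib

def lucasU {R : Type*} [CommRing R] (x y : R) : ℕ → R
  | 0 => 0
  | 1 => 1
  | n + 2 => x * lucasU x y (n + 1) - y * lucasU x y n

def lucasV {R : Type*} [CommRing R] (x y : R) : ℕ → R
  | 0 => 2
  | 1 => x
  | n + 2 => x * lucasV x y (n + 1) - y * lucasV x y n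

/-!
Subtracting `q` times each row from the next one, and then `q` times each column from the next
one, preserves the determinant and turns `(q ^ |j - k| + x δⱼₖ)` into the symmetric tridiagonal
matrix with off-diagonal entries `-q x` and diagonal `1 + x, a, …, a`, where
`a = 1 - q² + (1 + q²) x`. Expanding along the last row gives the continuant recurrence
`Dₙ₊₂ = a Dₙ₊₁ - q² x² Dₙ`, whose solution with `D₀ = 1`, `D₁ = 1 + x` is
`Dₙ = uₙ₊₁ + q² (1 - x) uₙ`; for `n ≥ 1` this is `(x + 1) uₙ - q² x² uₙ₋₁`.
-/

open Matrix

section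

variable {R : Type*} [CommRing R]

theorem eq_lucasU_of_recurrence {a b : R} {s : ℕ → R}
    (hs : ∀ n, s (n + 2) = a * s (n + 1) - b * s n) (n : ℕ) :
    s n = s 0 * lucasU a b (n + 1) + (s 1 - a * s 0) * lucasU a b n := by
  induction n using Nat.twoStepInduction with
  | zero => simp [lucasU]
  | one => simp only [lucasU]; ring
  | more n ih₀ ih₁ =>
    rw [hs, ih₀, ih₁]
    simp only [lucasU]
    ring

def natMatrix {α : Type*} (f : ℕ → ℕ → α) (n : ℕ) : Matrix (Fin n) (Fin n) α :=
  of fun j k => f j k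

@[simp]
theorem natMatrix_apply {α : Type*} (f : ℕ → ℕ → α) {n : ℕ} (j k : Fin n) :
    natMatrix f n j k = f j k := rfl

theorem natMatrix_transpose {α : Type*} (f : ℕ → ℕ → α) (n : ℕ) :
    (natMatrix f n)ᵀ = natMatrix (flip f) n := rfl

def rowDiff (c : R) (f : ℕ → ℕ → R) : ℕ → ℕ → R
  | 0, k => f 0 k
  | j + 1, k => f (j + 1) k - c * f j k

theorem det_natMatrix_rowDiff (c : R) (f : ℕ → ℕ → R) (n : ℕ) :
    det (natMatrix (rowDiff c f) n) = det (natMatrix f n) := by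
  cases n with
  | zero => simp only [det_isEmpty]
  | succ n =>
    refine (det_eq_of_forall_row_eq_smul_add_pred (A := natMatrix f _)
      (B := natMatrix (rowDiff c f) _) (fun _ => c) (fun _ => rfl) fun i j => ?_).symm
    simp only [natMatrix, of_apply, Fin.val_succ, Fin.val_castSucc, rowDiff]
    ring

def tridiag (a b c : ℕ → R) : ℕ → ℕ → R := fun j k =>
  if j = k then a j else if k = j + 1 then b j else if j = k + 1 then c k else 0

theorem tridiag_eq_zero_of_add_one_lt (a b c : ℕ → R) {j k : ℕ}
    (h : k + 1 < j ∨ j + 1 < k) : tridiag a b c j k = 0 := by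
  simp only [tridiag]
  split_ifs <;> first | rfl | omega

theorem natMatrix_submatrix_castSucc {α : Type*} (f : ℕ → ℕ → α) (n : ℕ) :
    (natMatrix f (n + 1)).submatrix Fin.castSucc Fin.castSucc = natMatrix f n := rfl

theorem det_natMatrix_tridiag_minor (a b c : ℕ → R) (n : ℕ) :
    det ((natMatrix (tridiag a b c) (n + 2)).submatrix Fin.castSucc
      (Fin.last n).castSucc.succAbove) = b n * det (natMatrix (tridiag a b c) n) := by
  rw [det_succ_column _ (Fin.last _), Fin.sum_univ_castSucc,
    Finset.sum_eq_zero fun i _ => by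
      rw [submatrix_apply, Fin.succAbove_castSucc_self, natMatrix, of_apply,
        tridiag_eq_zero_of_add_one_lt _ _ _
          (by simp only [Fin.val_castSucc, Fin.val_succ, Fin.val_last]; omega),
        mul_zero, zero_mul],
    Fin.succAbove_last, submatrix_submatrix]
  have hcols : (Fin.last n).castSucc.succAbove ∘ Fin.castSucc = Fin.castSucc ∘ Fin.castSucc :=
    funext fun k => Fin.succAbove_castSucc_of_lt _ _ (Fin.castSucc_lt_last k)
  rw [hcols, ← submatrix_submatrix, natMatrix_submatrix_castSucc, natMatrix_submatrix_castSucc,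
    submatrix_apply, Fin.succAbove_castSucc_self, ← two_mul, pow_mul, neg_one_sq, one_pow,
    one_mul]
  simp [natMatrix, tridiag]

theorem det_natMatrix_tridiag_add_two (a b c : ℕ → R) (n : ℕ) :
    det (natMatrix (tridiag a b c) (n + 2)) =
      a (n + 1) * det (natMatrix (tridiag a b c) (n + 1))
        - b n * c n * det (natMatrix (tridiag a b c) n) := by
  rw [det_succ_row _ (Fin.last _), Fin.sum_univ_castSucc, Fin.sum_univ_castSucc,
    Finset.sum_eq_zero fun j _ => by
      rw [natMatrix, of_apply, tridiag_eq_zero_of_add_one_lt _ _ _ (by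
        simp only [Fin.val_last, Fin.val_castSucc]; omega), mul_zero, zero_mul],
    Fin.succAbove_last, det_natMatrix_tridiag_minor, natMatrix_submatrix_castSucc]
  simp only [natMatrix_apply, Fin.val_last, Fin.val_castSucc, tridiag, if_true, if_false,
    show n + 1 ≠ n by omega, show n ≠ n + 1 + 1 by omega]
  rw [show n + 1 + n = 2 * n + 1 by ring, show n + 1 + (n + 1) = 2 * (n + 1) by ring,
    pow_succ, pow_mul, pow_mul, neg_one_sq, one_pow, one_pow]
  ring

/-- Entries of the Kac–Murdock–Szegő matrix. -/
def kms (q : R) (j k : ℕ) : R := q ^ ((j : ℤ) - (k : ℤ)).natAbs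

theorem kms_self (q : R) (j : ℕ) : kms q j j = 1 := by simp [kms]

theorem kms_eq_mul_kms (q : R) (j k j' k' : ℕ)
    (h : ((j : ℤ) - k).natAbs = ((j' : ℤ) - k').natAbs + 1) : kms q j k = q * kms q j' k' := by
  rw [kms, kms, h, pow_succ']

def shiftedKms (q x : R) (j k : ℕ) : R :=
  kms q j k + x * if j = k then 1 else 0

theorem rowDiff_flip_rowDiff_shiftedKms (q x : R) :
    rowDiff q (flip (rowDiff q (shiftedKms q x))) =
      tridiag (fun j => if j = 0 then 1 + x else 1 - q ^ 2 + (1 + q ^ 2) * x)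
        (fun _ => -(q * x)) (fun _ => -(q * x)) := by
  funext j k
  rcases j with _ | j <;> rcases k with _ | k <;> simp only [rowDiff, flip, shiftedKms, tridiag]
  · simp [kms_self]
  · rw [kms_eq_mul_kms q (k + 1) 0 k 0 (by omega)]
    rcases k with _ | k
    · simp only [kms_self, zero_add, one_ne_zero, zero_ne_one, ↓reduceIte, mul_one, mul_zero,
        add_zero]
      ring
    · simp
  · rw [kms_eq_mul_kms q 0 (j + 1) 0 j (by omega)]
    rcases j with _ | j
    · simp only [kms_self, zero_add, one_ne_zero, zero_ne_one, ↓reduceIte, mul_one, mul_zero,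
        add_zero, Nat.reduceAdd, OfNat.zero_ne_ofNat]
      ring
    · simp
  -- Write the four `kms` entries as powers of `q` times the one nearest the diagonal.
  rcases lt_trichotomy j k with h | rfl | h
  · rw [kms_eq_mul_kms q (k + 1) (j + 1) k (j + 1) (by omega),
      kms_eq_mul_kms q (k + 1) j k j (by omega), kms_eq_mul_kms q k j k (j + 1) (by omega)]
    split_ifs <;> first | omega | ring
  · rw [kms_eq_mul_kms q (j + 1) j j j (by omega), kms_eq_mul_kms q j (j + 1) j j (by omega)]
    simp only [kms_self, Nat.add_eq_zero_iff, one_ne_zero, and_false, ↓reduceIte, mul_one,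
      mul_zero, add_zero, Nat.add_eq_left, Nat.left_eq_add]
    ring
  · rw [kms_eq_mul_kms q (k + 1) (j + 1) (k + 1) j (by omega),
      kms_eq_mul_kms q k (j + 1) k j (by omega), kms_eq_mul_kms q k j (k + 1) j (by omega)]
    split_ifs <;> first | omega | ring

theorem det_shiftedKms (q x : R) (n : ℕ) :
    det (natMatrix (shiftedKms q x) n) =
      lucasU (1 - q ^ 2 + (1 + q ^ 2) * x) (q ^ 2 * x ^ 2) (n + 1)
        + q ^ 2 * (1 - x) * lucasU (1 - q ^ 2 + (1 + q ^ 2) * x) (q ^ 2 * x ^ 2) n := by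
  set T := tridiag (fun j => if j = 0 then 1 + x else 1 - q ^ 2 + (1 + q ^ 2) * x)
    (fun _ => -(q * x)) (fun _ => -(q * x))
  have hT : det (natMatrix (shiftedKms q x) n) = det (natMatrix T n) := by
    rw [← det_natMatrix_rowDiff q, ← det_transpose, natMatrix_transpose,
      ← det_natMatrix_rowDiff q, rowDiff_flip_rowDiff_shiftedKms]
  have hrec (m : ℕ) : det (natMatrix T (m + 2)) = (1 - q ^ 2 + (1 + q ^ 2) * x) *
      det (natMatrix T (m + 1)) - q ^ 2 * x ^ 2 * det (natMatrix T m) := by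
    rw [det_natMatrix_tridiag_add_two]
    simp only [Nat.add_one_ne_zero, if_false]
    ring
  rw [hT, eq_lucasU_of_recurrence (s := fun m => det (natMatrix T m)) hrec n, det_isEmpty,
    det_fin_one]
  simp only [natMatrix_apply, T, tridiag, Fin.val_eq_zero, ↓reduceIte, one_mul, mul_one]
  ring

end

theorem stmt_16 {R : Type*} [CommRing R] (q x : R) (n : ℕ) (hn : 0 < n) :
    Matrix.det (Matrix.of fun j k : Fin n =>
        q ^ ((j : ℤ) - (k : ℤ)).natAbs + x * (if j = k then 1 else 0)) =
      (x + 1) * lucasU (1 - q ^ 2 + (1 + q ^ 2) * x) (q ^ 2 * x ^ 2) n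
        - q ^ 2 * x ^ 2 * lucasU (1 - q ^ 2 + (1 + q ^ 2) * x) (q ^ 2 * x ^ 2) (n - 1) := by
  obtain ⟨m, rfl⟩ := Nat.exists_eq_add_one_of_ne_zero hn.ne'
  have hM : (Matrix.of fun j k : Fin (m + 1) =>
      q ^ ((j : ℤ) - (k : ℤ)).natAbs + x * (if j = k then 1 else 0)) =
        natMatrix (shiftedKms q x) (m + 1) := by
    ext j k
    simp [shiftedKms, kms, Fin.ext_iff]
  rw [hM, det_shiftedKms, Nat.add_sub_cancel, lucasU]
  ring
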